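/- Let G be a connected 4-regular simple graph with at least two vertices, and let H be a Hamiltonian cycle in the subdivided double D(G). Then the complement of H in D(G) (the spanning subgraph whose edge set is E(D(G)) \ E(H)) is 2-regular and connected, and hence is a single cycle through all vertices of D(G). -/

import Mathlib

/-!
Removing a Hamiltonian cycle `H` from the 4-regular graph `D(G)` leaves a 2-regular graph, so
only connectivity needs an argument. Write `a'` for the twin `(v, !i)` of `a = (v, i)`. Whenever
`H` passes `a — e — b` through a subdivision vertex `e`, the twins `a'` and `b'` are joined
outside `H`: if `a` and `b` lie over the two distinct ends of `e`, then `a'` and `b'` are the two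
neighbours of `e` not used by `H`; if `a` and `b` are the two twins of one vertex `v`, their
`H`-neighbourhoods cover at most three of the four edges at `v`, so some subdivision vertex is
adjacent to both outside `H`. Walking along `H` thus connects all twin vertices in the
complement, and every subdivision vertex has a twin neighbour there.
-/

open SimpleGraph

/-- The subdivided double `D(G)` of a simple graph `G`: vertices are the twin vertices
`(v, i)` for `v : V`, `i : Bool`, together with the subdivision vertices (edges of `G`);
a twin vertex `(v, i)` is adjacent to a subdivision vertex `e` iff `v` is an endpoint of `e`. -/
def subdividedDouble {V : Type*} (G : SimpleGraph V) :
    SimpleGraph ((V × Bool) ⊕ ↥G.edgeSet) :=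
  SimpleGraph.fromRel fun x y =>
    ∃ (v : V) (i : Bool) (e : G.edgeSet),
      x = Sum.inl (v, i) ∧ y = Sum.inr e ∧ v ∈ (e : Sym2 V)

namespace SimpleGraph

variable {W : Type*} {Γ : SimpleGraph W}

lemma fromEdgeSet_edgeSet_diff_edges {u v : W} (p : Γ.Walk u v) :
    fromEdgeSet {e | e ∈ Γ.edgeSet ∧ e ∉ p.edges} = Γ \ p.toSubgraph.spanningCoe := by
  ext x y
  simp only [fromEdgeSet_adj, Set.mem_ofPred_eq, mem_edgeSet, sdiff_adj,
    Subgraph.spanningCoe_adj, Walk.adj_toSubgraph_iff_mem_edges]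
  exact ⟨fun ⟨h, _⟩ => h, fun h => ⟨h, h.1.ne⟩⟩

lemma ncard_neighborSet_sdiff_of_le [Finite W] {K : SimpleGraph W} (hK : K ≤ Γ) (w : W) :
    ((Γ \ K).neighborSet w).ncard = (Γ.neighborSet w).ncard - (K.neighborSet w).ncard := by
  rw [neighborSet_sdiff, Set.ncard_sdiff (neighborSet_mono hK w)]

lemma Walk.reachable_spanningCoe_toSubgraph {u v x y : W} (p : Γ.Walk u v)
    (hx : x ∈ p.support) (hy : y ∈ p.support) : p.toSubgraph.spanningCoe.Reachable x y :=
  (p.toSubgraph_connected.preconnected ⟨x, p.mem_verts_toSubgraph.2 hx⟩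
    ⟨y, p.mem_verts_toSubgraph.2 hy⟩).map ⟨Subtype.val, id⟩

lemma Walk.IsCycle.isHamiltonianCycle_of_forall_mem_support [DecidableEq W] {u : W}
    {p : Γ.Walk u u} (hp : p.IsCycle) (hsupp : ∀ w, w ∈ p.support) : p.IsHamiltonianCycle := by
  refine Walk.isHamiltonianCycle_iff_isCycle_and_support_count_tail_eq_one.2
    ⟨hp, fun w => List.count_eq_one_of_mem hp.support_nodup ?_⟩
  by_cases hw : w = u
  · exact hw ▸ Walk.end_mem_tail_support hp.not_nil
  · have := hsupp w
    rw [← Walk.cons_tail_support, List.mem_cons] at this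
    exact this.resolve_left hw

lemma Connected.exists_isHamiltonianCycle_of_ncard_neighborSet_eq_two [Finite W] [DecidableEq W]
    (hconn : Γ.Connected) (h2 : ∀ w, (Γ.neighborSet w).ncard = 2) :
    ∃ (u : W) (p : Γ.Walk u u), p.IsHamiltonianCycle := by
  obtain ⟨u⟩ := hconn.nonempty
  have hcyc : Γ.IsCycles := fun w _ => h2 w
  obtain ⟨p, hp, hverts⟩ := hcyc.exists_cycle_toSubgraph_verts_eq_connectedComponentSupp
    (c := Γ.connectedComponentMk u) rfl (Set.nonempty_of_ncard_ne_zero (by simp [h2]))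
  refine ⟨u, p, hp.isHamiltonianCycle_of_forall_mem_support fun w => ?_⟩
  rw [← Walk.mem_verts_toSubgraph, hverts, ConnectedComponent.mem_supp_iff,
    ConnectedComponent.eq]
  exact hconn.preconnected w u

lemma Reachable.of_bipartite_steps {α β : Type*} {Γ : SimpleGraph (α ⊕ β)}
    {Λ : SimpleGraph W} (f : α → W) (hinl : ∀ a a', ¬Γ.Adj (.inl a) (.inl a'))
    (hinr : ∀ e e', ¬Γ.Adj (.inr e) (.inr e'))
    (hstep : ∀ a e b, Γ.Adj (.inl a) (.inr e) → Γ.Adj (.inr e) (.inl b) →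
      Λ.Reachable (f a) (f b))
    {a b : α} (h : Γ.Reachable (.inl a) (.inl b)) : Λ.Reachable (f a) (f b) := by
  suffices key : ∀ {u w} (p : Γ.Walk u w), w = .inl b →
      Sum.elim (fun a => Λ.Reachable (f a) (f b))
        (fun e => ∀ a, Γ.Adj (.inl a) (.inr e) → Λ.Reachable (f a) (f b)) u from
    key h.some rfl
  intro u w p hb
  induction p with
  | nil => subst hb; exact Reachable.refl _
  | @cons u v _ hadj p ih =>
    specialize ih hb
    rcases u with a | e <;> rcases v with a' | e'
    · exact absurd hadj (hinl _ _)
    · exact ih a hadj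
    · exact fun a ha => (hstep a e a' ha hadj).trans ih
    · exact absurd hadj (hinr _ _)

end SimpleGraph

section SubdividedDouble

variable {V : Type*} {G : SimpleGraph V}

@[simp]
lemma subdividedDouble_adj_inl_inr {a : V × Bool} {e : G.edgeSet} :
    (subdividedDouble G).Adj (.inl a) (.inr e) ↔ a.1 ∈ (e : Sym2 V) := by
  obtain ⟨v, i⟩ := a
  cases i <;> simp [subdividedDouble]

@[simp]
lemma subdividedDouble_adj_inr_inl {a : V × Bool} {e : G.edgeSet} :
    (subdividedDouble G).Adj (.inr e) (.inl a) ↔ a.1 ∈ (e : Sym2 V) := by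
  rw [adj_comm, subdividedDouble_adj_inl_inr]

@[simp]
lemma subdividedDouble_not_adj_inl_inl (a b : V × Bool) :
    ¬(subdividedDouble G).Adj (.inl a) (.inl b) := by
  simp [subdividedDouble]

@[simp]
lemma subdividedDouble_not_adj_inr_inr (e f : G.edgeSet) :
    ¬(subdividedDouble G).Adj (.inr e) (.inr f) := by
  simp [subdividedDouble]

lemma subdividedDouble_neighborSet_inl (a : V × Bool) :
    (subdividedDouble G).neighborSet (.inl a) =
      Sum.inr '' {e : G.edgeSet | a.1 ∈ (e : Sym2 V)} := by
  ext (b | e) <;> simp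

lemma subdividedDouble_ncard_neighborSet_inl [Fintype V] [DecidableRel G.Adj] (a : V × Bool) :
    ((subdividedDouble G).neighborSet (.inl a)).ncard = G.degree a.1 := by
  classical
  have hpre : {e : G.edgeSet | a.1 ∈ (e : Sym2 V)} = Subtype.val ⁻¹' G.incidenceSet a.1 := by
    ext e
    simp [incidenceSet]
  rw [subdividedDouble_neighborSet_inl, Set.ncard_image_of_injective _ Sum.inr_injective, hpre,
    Set.ncard_preimage_of_injective_subset_range Subtype.val_injective
      (by simpa using G.incidenceSet_subset a.1),
    Set.ncard_eq_toFinset_card', Set.toFinset_card, card_incidenceSet_eq_degree]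

lemma subdividedDouble_ncard_neighborSet_inr (e : G.edgeSet) :
    ((subdividedDouble G).neighborSet (.inr e)).ncard = 4 := by
  obtain ⟨e, he⟩ := e
  induction e using Sym2.ind with
  | _ u w =>
  have hne : u ≠ w := G.ne_of_adj he
  have hnbr : (subdividedDouble G).neighborSet (.inr ⟨s(u, w), he⟩) =
      {.inl (u, false), .inl (u, true), .inl (w, false), .inl (w, true)} := by
    ext (⟨v, i⟩ | f)
    · cases i <;> simp [or_comm]
    · simp
  rw [hnbr, Set.ncard_insert_of_notMem (by simp [hne]),
    Set.ncard_insert_of_notMem (by simp [hne]), Set.ncard_pair (by simp)]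

lemma subdividedDouble_ncard_neighborSet [Fintype V] [DecidableRel G.Adj]
    (hreg : G.IsRegularOfDegree 4) (z : (V × Bool) ⊕ G.edgeSet) :
    ((subdividedDouble G).neighborSet z).ncard = 4 := by
  rcases z with a | e
  · rw [subdividedDouble_ncard_neighborSet_inl, hreg]
  · exact subdividedDouble_ncard_neighborSet_inr e

end SubdividedDouble

section TwoFactor

variable {V : Type*} {G : SimpleGraph V} {K : SimpleGraph ((V × Bool) ⊕ G.edgeSet)}

lemma ncard_neighborSet_subdividedDouble_sdiff [Fintype V] [DecidableRel G.Adj]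
    (hreg : G.IsRegularOfDegree 4) (hKD : K ≤ subdividedDouble G)
    (hK2 : ∀ z, (K.neighborSet z).ncard = 2) (z : (V × Bool) ⊕ G.edgeSet) :
    ((subdividedDouble G \ K).neighborSet z).ncard = 2 := by
  rw [ncard_neighborSet_sdiff_of_le hKD, subdividedDouble_ncard_neighborSet hreg, hK2]

lemma subdividedDouble_sdiff_adj_inr_flip (hKD : K ≤ subdividedDouble G)
    (hK2 : ∀ z, (K.neighborSet z).ncard = 2) {a b : V × Bool} {e : G.edgeSet}
    (ha : K.Adj (.inl a) (.inr e)) (hb : K.Adj (.inr e) (.inl b)) (hab : a.1 ≠ b.1) :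
    (subdividedDouble G \ K).Adj (.inr e) (.inl (a.1, !a.2)) := by
  have hKe : K.neighborSet (.inr e) = {.inl a, .inl b} := by
    refine (Set.eq_of_subset_of_ncard_le ?_ ?_
      (Set.finite_of_ncard_ne_zero (by rw [hK2]; norm_num))).symm
    · simpa [Set.insert_subset_iff] using ⟨ha.symm, hb⟩
    · rw [hK2, Set.ncard_pair (by simpa using fun h => hab (congrArg Prod.fst h))]
  have hout : Sum.inl (a.1, !a.2) ∉ K.neighborSet (.inr e) := by
    rw [hKe]
    rintro (h | h) <;> simp_all [Prod.ext_iff]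
  exact ⟨by simpa using hKD ha, hout⟩

lemma exists_subdividedDouble_sdiff_adj_twins [Fintype V] [DecidableRel G.Adj]
    (hreg : G.IsRegularOfDegree 4) (hK2 : ∀ z, (K.neighborSet z).ncard = 2) {v : V} {i : Bool}
    {e : G.edgeSet} (hi : K.Adj (.inl (v, i)) (.inr e)) (hi' : K.Adj (.inl (v, !i)) (.inr e)) :
    ∃ y, (subdividedDouble G \ K).Adj (.inl (v, i)) y ∧
      (subdividedDouble G \ K).Adj (.inl (v, !i)) y := by
  have hN : (K.neighborSet (.inl (v, i)) ∪ K.neighborSet (.inl (v, !i))).ncard <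
      ((subdividedDouble G).neighborSet (.inl (v, i))).ncard := by
    have hinter : 0 < (K.neighborSet (.inl (v, i)) ∩ K.neighborSet (.inl (v, !i))).ncard :=
      (Set.ncard_pos).2 ⟨.inr e, hi, hi'⟩
    have := Set.ncard_union_add_ncard_inter (K.neighborSet (.inl (v, i)))
      (K.neighborSet (.inl (v, !i)))
    rw [hK2, hK2] at this
    rw [subdividedDouble_ncard_neighborSet hreg]
    omega
  obtain ⟨y, hyD, hyN⟩ := Set.exists_mem_notMem_of_ncard_lt_ncard hN
  have hyD' : y ∈ (subdividedDouble G).neighborSet (.inl (v, !i)) := by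
    rwa [subdividedDouble_neighborSet_inl] at hyD ⊢
  exact ⟨y, ⟨hyD, fun h => hyN (.inl h)⟩, ⟨hyD', fun h => hyN (.inr h)⟩⟩

lemma subdividedDouble_sdiff_reachable_flip [Fintype V] [DecidableRel G.Adj]
    (hreg : G.IsRegularOfDegree 4) (hKD : K ≤ subdividedDouble G)
    (hK2 : ∀ z, (K.neighborSet z).ncard = 2) {a b : V × Bool} {e : G.edgeSet}
    (ha : K.Adj (.inl a) (.inr e)) (hb : K.Adj (.inr e) (.inl b)) :
    (subdividedDouble G \ K).Reachable (.inl (a.1, !a.2)) (.inl (b.1, !b.2)) := by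
  obtain ⟨v, i⟩ := a
  obtain ⟨w, j⟩ := b
  by_cases hvw : v = w
  · subst hvw
    by_cases hij : i = j
    · subst hij; rfl
    obtain rfl : j = !i := by cases i <;> cases j <;> simp_all
    obtain ⟨y, hy, hy'⟩ := exists_subdividedDouble_sdiff_adj_twins hreg hK2 ha hb.symm
    rw [Bool.not_not]
    exact hy'.reachable.trans hy.reachable.symm
  · exact (subdividedDouble_sdiff_adj_inr_flip hKD hK2 ha hb hvw).reachable.symm.trans
      (subdividedDouble_sdiff_adj_inr_flip hKD hK2 hb.symm ha.symm (Ne.symm hvw)).reachable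

lemma connected_subdividedDouble_sdiff [Fintype V] [DecidableRel G.Adj]
    (hreg : G.IsRegularOfDegree 4) (hKD : K ≤ subdividedDouble G)
    (hK2 : ∀ z, (K.neighborSet z).ncard = 2) (hK : K.Connected) :
    (subdividedDouble G \ K).Connected := by
  have htwins (a b : V × Bool) : (subdividedDouble G \ K).Reachable (.inl a) (.inl b) := by
    simpa using Reachable.of_bipartite_steps (fun a : V × Bool => Sum.inl (a.1, !a.2))
      (fun a a' h => subdividedDouble_not_adj_inl_inl a a' (hKD h))
      (fun e e' h => subdividedDouble_not_adj_inr_inr e e' (hKD h))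
      (fun _ _ _ => subdividedDouble_sdiff_reachable_flip hreg hKD hK2)
      (hK.preconnected (.inl (a.1, !a.2)) (.inl (b.1, !b.2)))
  have hinl : ∀ z, ∃ a, (subdividedDouble G \ K).Reachable z (.inl a) := by
    rintro (a | e)
    · exact ⟨a, .rfl⟩
    obtain ⟨y, hy⟩ := Set.nonempty_of_ncard_ne_zero
      (by rw [ncard_neighborSet_subdividedDouble_sdiff hreg hKD hK2 (.inr e)]; norm_num)
    rcases y with a | f
    · exact ⟨a, hy.reachable⟩
    · exact absurd hy.1 (subdividedDouble_not_adj_inr_inr e f)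
  obtain ⟨x⟩ := hK.nonempty
  refine (connected_iff _).2 ⟨fun y z => ?_, ⟨x⟩⟩
  obtain ⟨a, ha⟩ := hinl y
  obtain ⟨b, hb⟩ := hinl z
  exact ha.trans ((htwins a b).trans hb.symm)

end TwoFactor

theorem subdividedDouble_complement_hamiltonian_general {V : Type} [Fintype V] [DecidableEq V]
    (G : SimpleGraph V) [DecidableRel G.Adj]
    (hreg : G.IsRegularOfDegree 4)
    (x : (V × Bool) ⊕ ↥G.edgeSet) (H : (subdividedDouble G).Walk x x)
    (hH : H.IsHamiltonianCycle) :
    (∀ z, ((SimpleGraph.fromEdgeSet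
        {e | e ∈ (subdividedDouble G).edgeSet ∧ e ∉ H.edges}).neighborSet z).ncard = 2) ∧
    (SimpleGraph.fromEdgeSet
        {e | e ∈ (subdividedDouble G).edgeSet ∧ e ∉ H.edges}).Connected ∧
    ∃ (y : (V × Bool) ⊕ ↥G.edgeSet)
        (c : (SimpleGraph.fromEdgeSet
          {e | e ∈ (subdividedDouble G).edgeSet ∧ e ∉ H.edges}).Walk y y),
      c.IsHamiltonianCycle := by
  rw [fromEdgeSet_edgeSet_diff_edges]
  have hK2 (z : (V × Bool) ⊕ G.edgeSet) : (H.toSubgraph.spanningCoe.neighborSet z).ncard = 2 :=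
    hH.isCycle.ncard_neighborSet_toSubgraph_eq_two (hH.mem_support z)
  have hK : H.toSubgraph.spanningCoe.Connected :=
    (connected_iff _).2 ⟨fun y z => H.reachable_spanningCoe_toSubgraph (hH.mem_support y)
      (hH.mem_support z), ⟨x⟩⟩
  have h2 := ncard_neighborSet_subdividedDouble_sdiff hreg H.toSubgraph.spanningCoe_le hK2
  have hconn := connected_subdividedDouble_sdiff hreg H.toSubgraph.spanningCoe_le hK2 hK
  exact ⟨h2, hconn, hconn.exists_isHamiltonianCycle_of_ncard_neighborSet_eq_two h2⟩

/-- For a Hamiltonian cycle `H` of the subdivided double of a connected 4-regular graph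
with at least two vertices, the complement of `H` (the spanning subgraph on the edges of
`D(G)` not used by `H`) is 2-regular and connected, and hence is a single cycle through
all vertices of `D(G)`, i.e. a Hamiltonian cycle. -/
theorem subdividedDouble_complement_hamiltonian {V : Type} [Fintype V] [DecidableEq V]
    (G : SimpleGraph V) [DecidableRel G.Adj] (hcard : 2 ≤ Fintype.card V)
    (hconn : G.Connected) (hreg : G.IsRegularOfDegree 4)
    (x : (V × Bool) ⊕ ↥G.edgeSet) (H : (subdividedDouble G).Walk x x)
    (hH : H.IsHamiltonianCycle) :
    (∀ z, ((SimpleGraph.fromEdgeSet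
        {e | e ∈ (subdividedDouble G).edgeSet ∧ e ∉ H.edges}).neighborSet z).ncard = 2) ∧
    (SimpleGraph.fromEdgeSet
        {e | e ∈ (subdividedDouble G).edgeSet ∧ e ∉ H.edges}).Connected ∧
    ∃ (y : (V × Bool) ⊕ ↥G.edgeSet)
        (c : (SimpleGraph.fromEdgeSet
          {e | e ∈ (subdividedDouble G).edgeSet ∧ e ∉ H.edges}).Walk y y),
      c.IsHamiltonianCycle :=
  subdividedDouble_complement_hamiltonian_general G hreg x H hH
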